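/- Let 0 < δ < 1, let v = (1−δ) Σ_{t=0}^∞ δ^t v(0) M^t and ν = (1−δ) Σ_{t=0}^∞ δ^t ν(0) (M'')^t be the discounted mean distributions of the full and m-strategy reduced chains. Then the focal player's long-term payoff computed from the full chain equals that computed from the reduced chain: Σ_{h ∈ {C,D}^n} v_h s_h = Σ_{x_1,…,x_m} ( ν_{(C,x_1,…,x_m)} · a_{x_1+…+x_m} + ν_{(D,x_1,…,x_m)} · b_{x_1+…+x_m} ). -/

import Mathlib

open Finset Matrix
open scoped Classical

noncomputable section

/-- A memory-1 strategy: an initial cooperation probability `init` and conditional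
cooperation probabilities `cond A j`: the probability to cooperate in the next round
when one's own action in the current round was `A` (`true` = cooperate) and exactly
`j` co-players cooperated. -/
structure Mem1 where
  init : ℝ
  cond : Bool → ℕ → ℝ

/-- All entries of the strategy lie in `[0,1]`. -/
def Mem1.valid (p : Mem1) : Prop :=
  p.init ∈ Set.Icc (0:ℝ) 1 ∧ ∀ A j, p.cond A j ∈ Set.Icc (0:ℝ) 1

/-- A full state: the action of each of the `n` players (`true` = cooperate). -/
abbrev FullState (n : ℕ) := Fin n → Bool

/-- The number of cooperators `σ(h)` in a full state. -/
def nCoop {n : ℕ} (h : FullState n) : ℕ :=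
  (Finset.univ.filter fun i => h i = true).card

/-- The full transition matrix `M` on the `2^n` full states, given each player's
memory-1 strategy: `m_{h,h'} = ∏ i u_i`, where `u_i` is player `i`'s probability of
choosing action `h' i` given that in state `h` his action was `h i` and
`σ(h) - f(h i)` of his co-players cooperated. -/
def fullM {n : ℕ} (strat : Fin n → Mem1) : Matrix (FullState n) (FullState n) ℝ :=
  Matrix.of fun h h' => ∏ i,
    (if h' i then (strat i).cond (h i) (nCoop h - if h i then 1 else 0)
     else 1 - (strat i).cond (h i) (nCoop h - if h i then 1 else 0))

/-- The initial full-state distribution `v(0)`: each player cooperates independently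
with the initial probability of his own strategy, `v(0)_h = ∏ i |1 - f(A_i) - p^i_0|`. -/
def fullInit {n : ℕ} (strat : Fin n → Mem1) : FullState n → ℝ :=
  fun h => ∏ i, |1 - (if h i then (1:ℝ) else 0) - (strat i).init|

/-- Binomial transfer factor: for a block of `tot` co-players of one strategy of which
`x` cooperated in the last round, the probability that exactly `x'` of them cooperate
in the next round, where previous cooperators cooperate with probability `pc` and
previous defectors with probability `pd`:
`Σ_{j=0}^{x'} C(x,j) pc^j (1-pc)^{x-j} C(tot-x, x'-j) pd^{x'-j} (1-pd)^{(tot-x)-(x'-j)}`. -/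
def transfer (pc pd : ℝ) (x tot x' : ℕ) : ℝ :=
  ∑ j ∈ Finset.range (x' + 1),
    (x.choose j : ℝ) * pc ^ j * (1 - pc) ^ (x - j) *
    ((tot - x).choose (x' - j) : ℝ) * pd ^ (x' - j) * (1 - pd) ^ ((tot - x) - (x' - j))

/-- The discounted mean distribution `(1-δ) Σ_{t=0}^∞ δ^t (w₀ T^t)`. -/
def discMean {α : Type*} [Fintype α] [DecidableEq α]
    (δ : ℝ) (w0 : α → ℝ) (T : Matrix α α ℝ) : α → ℝ :=
  fun j => (1 - δ) * ∑' t : ℕ, δ ^ t * (w0 ᵥ* T ^ t) j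

/-- The focal player's one-round payoff in full state `h`: `a_{σ(h)-1}` if he
cooperates, `b_{σ(h)}` if he defects. -/
def focalPayoff {n : ℕ} (focal : Fin n) (a b : ℕ → ℝ) (h : FullState n) : ℝ :=
  if h focal then a (nCoop h - 1) else b (nCoop h)

/-- Strategy assignment for `m` strategies: player `i` uses strategy `ps (assign i)`. -/
def stratM {n m : ℕ} (ps : Fin m → Mem1) (assign : Fin n → Fin m) : Fin n → Mem1 :=
  fun i => ps (assign i)

/-- The clustered state space for `m` strategies: the focal action together with, for
each strategy index `i`, the number `x i ∈ {0,…,k_i}` of cooperators among the `k_i`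
co-players using strategy `i`. -/
abbrev RStateM {m : ℕ} (ks : Fin m → ℕ) := Bool × ((i : Fin m) → Fin (ks i + 1))

/-- The cluster `A_{A,x_1,…,x_m}`: full states in which the focal player plays `A` and,
for every `i`, exactly `x i` of the co-players using strategy `i` cooperate. -/
def clusterM {n m : ℕ} (focal : Fin n) (assign : Fin n → Fin m) (ks : Fin m → ℕ)
    (A : Bool) (x : (i : Fin m) → Fin (ks i + 1)) : Finset (FullState n) :=
  Finset.univ.filter fun h =>
    h focal = A ∧
    ∀ i, (Finset.univ.filter fun j => j ≠ focal ∧ assign j = i ∧ h j = true).card = (x i : ℕ)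

/-- The `m`-strategy reduced transition matrix `M''` on the `2 ∏ (k_i+1)` clustered
states, for a focal player using strategy `ps i0`. -/
def redMM {m : ℕ} (ps : Fin m → Mem1) (ks : Fin m → ℕ) (i0 : Fin m) :
    Matrix (RStateM ks) (RStateM ks) ℝ :=
  Matrix.of fun s s' =>
    match s, s' with
    | (A, x), (A', x') =>
      |1 - (if A' then (1:ℝ) else 0) - (ps i0).cond A (∑ i, (x i : ℕ))| *
      ∏ i, transfer ((ps i).cond true ((∑ i', (x i' : ℕ)) + (if A then 1 else 0) - 1))
                    ((ps i).cond false ((∑ i', (x i' : ℕ)) + (if A then 1 else 0)))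
                    (x i : ℕ) (ks i) (x' i : ℕ)

/-- The initial clustered distribution `ν(0)` for `m` strategies. -/
def redInitM {m : ℕ} (ps : Fin m → Mem1) (ks : Fin m → ℕ) (i0 : Fin m) :
    RStateM ks → ℝ :=
  fun s => match s with
  | (A, x) =>
    |1 - (if A then (1:ℝ) else 0) - (ps i0).init| *
    ∏ i, (((ks i).choose (x i : ℕ) : ℝ) * (ps i).init ^ (x i : ℕ) *
          (1 - (ps i).init) ^ (ks i - (x i : ℕ)))

/-!
The full chain is lumpable with respect to the partition of full states into the clusters
`A_{A,x}`. Since the players randomize independently, the probability of moving from a full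
state `h` into a cluster factorizes into the focal player's factor and, for each strategy `i`,
the probability that exactly `x'_i` of the co-players using `i` cooperate next. The latter is a
Poisson-binomial probability with only two parameters (one for the previous cooperators, one for
the previous defectors), i.e. the convolution of two binomials `transfer`; it depends on `h` only
through its cluster. With the 0/1 aggregation matrix `P` this reads `M P = P M''` and
`v(0) P = ν(0)`, so `v(0) M^t P = ν(0) M''^t` for all `t`. The discounted series converges
(`v(0) M^t` is a probability vector), hence `v P = ν`; since the payoff is constant on
clusters, `s = P φ` and `v ⬝ s = (v P) ⬝ φ = ν ⬝ φ`.
-/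

section Lumping

variable {α β R : Type*} [DecidableEq β]

/-- For a map `π` onto the blocks of a partition, `M * lumpMatrix π = lumpMatrix π * N` is
Kemeny–Snell lumpability of `M`, with lumped transition matrix `N`. -/
def lumpMatrix [Zero R] [One R] (π : α → β) : Matrix α β R :=
  of fun a b => if π a = b then 1 else 0

variable [NonAssocSemiring R]

theorem vecMul_lumpMatrix_apply [Fintype α] (π : α → β) (v : α → R) (b : β) :
    (v ᵥ* lumpMatrix π) b = ∑ a ∈ univ.filter (π · = b), v a := by
  simp [lumpMatrix, vecMul_apply_eq_sum, sum_filter]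

theorem lumpMatrix_mulVec_apply [Fintype β] (π : α → β) (φ : β → R) (a : α) :
    (lumpMatrix π *ᵥ φ) a = φ (π a) := by
  simp [lumpMatrix, mulVec, dotProduct]

theorem mul_lumpMatrix_apply [Fintype α] (π : α → β) (M : Matrix α α R) (a : α) (b : β) :
    (M * (lumpMatrix π : Matrix α β R)) a b = ∑ a' ∈ univ.filter (π · = b), M a a' := by
  simp [lumpMatrix, mul_apply, sum_filter]

theorem lumpMatrix_mul_apply [Fintype β] (π : α → β) (N : Matrix β β R) (a : α) (b : β) :
    ((lumpMatrix π : Matrix α β R) * N) a b = N (π a) b := by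
  simp [lumpMatrix, mul_apply]

end Lumping

theorem Matrix.pow_mul_eq_mul_pow_of_mul_eq {α β R : Type*} [Fintype α] [Fintype β]
    [DecidableEq α] [DecidableEq β] [Semiring R] {M : Matrix α α R} {N : Matrix β β R}
    {P : Matrix α β R} (h : M * P = P * N) (t : ℕ) : M ^ t * P = P * N ^ t := by
  induction t with
  | zero => simp
  | succ t ih =>
    rw [pow_succ, Matrix.mul_assoc, h, ← Matrix.mul_assoc, ih, Matrix.mul_assoc, pow_succ]

theorem discMean_vecMul {α β : Type*} [Fintype α] [Fintype β] [DecidableEq α] [DecidableEq β]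
    {δ : ℝ} {w₀ : α → ℝ} {M : Matrix α α ℝ} {N : Matrix β β ℝ} {P : Matrix α β ℝ}
    (hMP : M * P = P * N) (hsum : ∀ a, Summable fun t => δ ^ t * (w₀ ᵥ* M ^ t) a) :
    discMean δ w₀ M ᵥ* P = discMean δ (w₀ ᵥ* P) N := by
  ext b
  have hpow (t : ℕ) : (w₀ ᵥ* P) ᵥ* N ^ t = (w₀ ᵥ* M ^ t) ᵥ* P := by
    rw [vecMul_vecMul, vecMul_vecMul, pow_mul_eq_mul_pow_of_mul_eq hMP]
  calc (discMean δ w₀ M ᵥ* P) b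
      = (1 - δ) * ∑ a, ∑' t, δ ^ t * (w₀ ᵥ* M ^ t) a * P a b := by
        simp only [vecMul_apply_eq_sum, discMean, mul_sum, tsum_mul_right, mul_assoc]
    _ = (1 - δ) * ∑' t, δ ^ t * ((w₀ ᵥ* M ^ t) ᵥ* P) b := by
        rw [← Summable.tsum_finsetSum fun a _ => (hsum a).mul_right _]
        simp only [vecMul_apply_eq_sum (w₀ ᵥ* M ^ _) P, mul_sum, mul_assoc]
    _ = discMean δ (w₀ ᵥ* P) N b := by simp only [discMean, hpow]

theorem summable_geometric_mul_vecMul_pow {α : Type*} [Fintype α] [DecidableEq α]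
    {δ : ℝ} (hδ0 : 0 ≤ δ) (hδ1 : δ < 1) {v : α → ℝ} (hv : ∀ a, 0 ≤ v a) (hv1 : v ⬝ᵥ 1 = 1)
    {M : Matrix α α ℝ} (hM : M ∈ rowStochastic ℝ α) (a : α) :
    Summable fun t => δ ^ t * (v ᵥ* M ^ t) a := by
  have hnonneg (t : ℕ) := nonneg_vecMul_of_mem_rowStochastic (pow_mem hM t) hv
  have hle (t : ℕ) : (v ᵥ* M ^ t) a ≤ 1 := by
    rw [← vecMul_dotProduct_one_eq_one_rowStochastic (pow_mem hM t) hv1, dotProduct_one]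
    exact single_le_sum (fun a _ => hnonneg t a) (mem_univ a)
  refine (summable_geometric_of_lt_one hδ0 hδ1).of_nonneg_of_le
    (fun t => mul_nonneg (pow_nonneg hδ0 t) (hnonneg t a)) fun t => ?_
  exact mul_le_of_le_one_right (pow_nonneg hδ0 t) (hle t)

section Bernoulli

open Polynomial

theorem Polynomial.coeff_C_add_C_mul_X_pow {R : Type*} [CommSemiring R] (a b : R) (N k : ℕ) :
    ((C a + C b * X) ^ N).coeff k = N.choose k * b ^ k * a ^ (N - k) := by
  rw [add_comm, add_pow, finsetSum_coeff]
  simp only [mul_pow, ← C_pow, ← C_eq_natCast, mul_comm _ (X ^ _), mul_assoc, ← C_mul,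
    coeff_X_pow_mul', coeff_C]
  rw [sum_eq_single k]
  · simp only [le_refl, Nat.sub_self, if_true]; ring
  · intro x _ hx
    split_ifs <;> first | rfl | omega
  · intro hk
    simp [Nat.choose_eq_zero_of_lt (by simpa using hk : N < k)]

variable {β : Type*} [Fintype β]

def bernoulliProd (q : β → ℝ) (g : β → Bool) : ℝ :=
  ∏ j, if g j then q j else 1 - q j

theorem bernoulliProd_nonneg {q : β → ℝ} (hq : ∀ j, q j ∈ Set.Icc 0 1) (g : β → Bool) :
    0 ≤ bernoulliProd q g :=
  prod_nonneg fun j _ => by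
    obtain ⟨h0, h1⟩ := hq j
    split <;> linarith

variable [DecidableEq β]

theorem sum_bernoulliProd (q : β → ℝ) : ∑ g, bernoulliProd q g = 1 := by
  simp only [bernoulliProd]
  rw [← Fintype.prod_sum (fun j (b : Bool) => if b then q j else 1 - q j)]
  simp

def poissonBinomial (q : β → ℝ) (k : ℕ) : ℝ :=
  ∑ g ∈ univ.filter fun g : β → Bool => (univ.filter fun j => g j = true).card = k,
    bernoulliProd q g

theorem poissonBinomial_eq_coeff (q : β → ℝ) (k : ℕ) :
    poissonBinomial q k = (∏ j, (C (1 - q j) + C (q j) * X)).coeff k := by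
  have hfactor (j : β) : C (1 - q j) + C (q j) * X
      = ∑ b : Bool, C (if b then q j else 1 - q j) * X ^ (if b then 1 else 0) := by
    simp [add_comm]
  simp only [hfactor, Fintype.prod_sum, prod_mul_distrib, ← map_prod, prod_pow_eq_pow_sum,
    sum_boole, finsetSum_coeff, coeff_C_mul_X_pow, poissonBinomial, sum_filter, bernoulliProd,
    Nat.cast_id, eq_comm]

theorem poissonBinomial_const (p : ℝ) (k : ℕ) :
    poissonBinomial (fun _ : β => p) k
      = (Fintype.card β).choose k * p ^ k * (1 - p) ^ (Fintype.card β - k) := by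
  rw [poissonBinomial_eq_coeff, prod_const, card_univ, coeff_C_add_C_mul_X_pow]

theorem poissonBinomial_ite (co : β → Bool) (pc pd : ℝ) (k : ℕ) :
    poissonBinomial (fun j => if co j then pc else pd) k
      = transfer pc pd (univ.filter fun j => co j = true).card (Fintype.card β) k := by
  have hfactor (j : β) : C (1 - if co j then pc else pd) + C (if co j then pc else pd) * X
      = if co j then C (1 - pc) + C pc * X else C (1 - pd) + C pd * X := by
    split <;> rfl
  have hcard : (univ.filter fun j => ¬co j = true).card
      = Fintype.card β - (univ.filter fun j => co j = true).card := by
    rw [filter_not, card_sdiff_of_subset (filter_subset _ _), card_univ]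
  rw [poissonBinomial_eq_coeff, prod_congr rfl fun j _ => hfactor j, prod_ite, prod_const,
    prod_const, hcard, coeff_mul, Nat.sum_antidiagonal_eq_sum_range_succ_mk, transfer]
  refine sum_congr rfl fun j _ => ?_
  rw [coeff_C_add_C_mul_X_pow, coeff_C_add_C_mul_X_pow]
  ring

end Bernoulli

section Coplayers

variable {n m : ℕ} (focal : Fin n) (assign : Fin n → Fin m)

abbrev CoplayerBlock (i : Fin m) : Type := {j : Fin n // j ≠ focal ∧ assign j = i}

def blockCoop (h : FullState n) (i : Fin m) : ℕ :=
  (univ.filter fun j => j ≠ focal ∧ assign j = i ∧ h j = true).card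

@[to_additive]
theorem prod_eq_mul_prod_coplayerBlock {M : Type*} [CommMonoid M] (F : Fin n → M) :
    ∏ j, F j = F focal * ∏ i, ∏ j : CoplayerBlock focal assign i, F j := by
  rw [← mul_prod_erase univ F (mem_univ focal), ← prod_fiberwise (univ.erase focal) assign F]
  congr 1
  refine prod_congr rfl fun i _ => prod_subtype _ (fun j => ?_) F
  simp

theorem blockCoop_eq_card (h : FullState n) (i : Fin m) :
    blockCoop focal assign h i
      = (univ.filter fun j : CoplayerBlock focal assign i => h j = true).card := by
  rw [blockCoop, card_filter, card_filter,
    ← sum_subtype (univ.filter fun j => j ≠ focal ∧ assign j = i) (by simp)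
      fun j => if h j = true then 1 else 0, sum_filter]
  simp only [ite_and]

theorem nCoop_eq_sum_blockCoop_add (h : FullState n) :
    nCoop h = ∑ i, blockCoop focal assign h i + if h focal then 1 else 0 := by
  simp only [nCoop, card_filter, sum_eq_add_sum_coplayerBlock focal assign, blockCoop_eq_card,
    add_comm]

theorem focalPayoff_eq_ite_sum_blockCoop (a b : ℕ → ℝ) (h : FullState n) :
    focalPayoff focal a b h
      = if h focal then a (∑ i, blockCoop focal assign h i)
        else b (∑ i, blockCoop focal assign h i) := by
  cases hf : h focal <;> simp [focalPayoff, nCoop_eq_sum_blockCoop_add focal assign h, hf]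

theorem mem_clusterM_iff (ks : Fin m → ℕ) (h : FullState n) (A : Bool)
    (x : (i : Fin m) → Fin (ks i + 1)) :
    h ∈ clusterM focal assign ks A x ↔ h focal = A ∧ ∀ i, blockCoop focal assign h i = x i := by
  simp [clusterM, blockCoop]

def splitFocal : (Fin n → Bool) ≃ Bool × ∀ i, (CoplayerBlock focal assign i → Bool) where
  toFun h := (h focal, fun _ j => h j)
  invFun p j := if hj : j = focal then p.1 else p.2 (assign j) ⟨j, hj, rfl⟩
  left_inv h := by
    funext j
    by_cases hj : j = focal
    · subst hj; simp
    · simp [hj]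
  right_inv := by
    rintro ⟨b, g⟩
    ext i ⟨j, hj, rfl⟩
    · simp
    · simp [hj]

theorem sum_clusterM_bernoulliProd (ks : Fin m → ℕ) (q : Fin n → ℝ) (A : Bool)
    (x : (i : Fin m) → Fin (ks i + 1)) :
    ∑ h ∈ clusterM focal assign ks A x, bernoulliProd q h
      = (if A then q focal else 1 - q focal)
        * ∏ i, poissonBinomial (fun j : CoplayerBlock focal assign i => q j) (x i) := by
  calc ∑ h ∈ clusterM focal assign ks A x, bernoulliProd q h
      = ∑ h, if h ∈ clusterM focal assign ks A x then bernoulliProd q h else 0 :=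
        (Fintype.sum_ite_mem _ _).symm
    _ = ∑ p : Bool × ∀ i, (CoplayerBlock focal assign i → Bool),
          (if p.1 = A then (if p.1 then q focal else 1 - q focal) else 0)
          * ∏ i, if (univ.filter fun j => p.2 i j = true).card = x i
              then bernoulliProd (fun j : CoplayerBlock focal assign i => q j) (p.2 i) else 0 := by
        refine Fintype.sum_equiv (splitFocal focal assign) _ _ fun h => ?_
        rw [Fintype.prod_ite_zero, ite_zero_mul_ite_zero, bernoulliProd,
          prod_eq_mul_prod_coplayerBlock focal assign]
        simp [mem_clusterM_iff, blockCoop_eq_card, splitFocal, bernoulliProd]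
    _ = (∑ b : Bool, if b = A then (if b then q focal else 1 - q focal) else 0)
          * ∑ g : ∀ i, (CoplayerBlock focal assign i → Bool), ∏ i,
              if (univ.filter fun j => g i j = true).card = x i
              then bernoulliProd (fun j : CoplayerBlock focal assign i => q j) (g i) else 0 := by
        rw [Fintype.sum_mul_sum, Fintype.sum_prod_type]
    _ = _ := by
        simp only [Fintype.sum_ite_eq', poissonBinomial, sum_filter]
        rw [Fintype.prod_sum fun i (g : CoplayerBlock focal assign i → Bool) =>
          if (univ.filter fun j => g j = true).card = x i
          then bernoulliProd (fun j : CoplayerBlock focal assign i => q j) g else 0]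

variable {focal assign} {ks : Fin m → ℕ}

theorem card_coplayerBlock
    (hcard : ∀ i, (univ.filter fun j => j ≠ focal ∧ assign j = i).card = ks i) (i : Fin m) :
    Fintype.card (CoplayerBlock focal assign i) = ks i :=
  (Fintype.card_subtype _).trans (hcard i)

def clusterOf (hcard : ∀ i, (univ.filter fun j => j ≠ focal ∧ assign j = i).card = ks i)
    (h : FullState n) : RStateM ks :=
  (h focal, fun i => ⟨blockCoop focal assign h i, Nat.lt_succ_of_le <| by
    rw [blockCoop_eq_card, ← card_coplayerBlock hcard i]
    exact card_filter_le _ _⟩)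

theorem filter_clusterOf_eq
    (hcard : ∀ i, (univ.filter fun j => j ≠ focal ∧ assign j = i).card = ks i) (s : RStateM ks) :
    univ.filter (clusterOf hcard · = s) = clusterM focal assign ks s.1 s.2 := by
  ext h
  simp [clusterOf, clusterM, Prod.ext_iff, funext_iff, Fin.ext_iff, blockCoop]

end Coplayers

theorem abs_one_sub_ite_sub {p : ℝ} (hp : p ∈ Set.Icc 0 1) (A : Bool) :
    |1 - (if A then 1 else 0) - p| = if A then p else 1 - p := by
  obtain ⟨h0, h1⟩ := hp
  cases A
  · simpa using abs_of_nonneg (sub_nonneg.2 h1)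
  · simpa using abs_of_nonneg h0

section Chain

variable {n : ℕ} {strat : Fin n → Mem1}

theorem fullM_row_eq_bernoulliProd (h : FullState n) :
    fullM strat h = bernoulliProd fun j => (strat j).cond (h j) (nCoop h - if h j then 1 else 0) :=
  rfl

theorem fullInit_eq_bernoulliProd (hstrat : ∀ j, (strat j).valid) :
    fullInit strat = bernoulliProd fun j => (strat j).init := by
  ext h
  exact prod_congr rfl fun j _ => abs_one_sub_ite_sub (hstrat j).1 (h j)

theorem fullM_mem_rowStochastic (hstrat : ∀ j, (strat j).valid) :
    fullM strat ∈ rowStochastic ℝ (FullState n) :=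
  mem_rowStochastic_iff_sum.2 ⟨fun _ => bernoulliProd_nonneg fun j => (hstrat j).2 _ _,
    fun _ => sum_bernoulliProd _⟩

theorem fullInit_nonneg (hstrat : ∀ j, (strat j).valid) (h : FullState n) :
    0 ≤ fullInit strat h := by
  rw [fullInit_eq_bernoulliProd hstrat]
  exact bernoulliProd_nonneg (fun j => (hstrat j).1) h

theorem fullInit_dotProduct_one (hstrat : ∀ j, (strat j).valid) : fullInit strat ⬝ᵥ 1 = 1 := by
  rw [dotProduct_one, fullInit_eq_bernoulliProd hstrat, sum_bernoulliProd]

end Chain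

section Reduction

variable {n m : ℕ} {ps : Fin m → Mem1} {ks : Fin m → ℕ} {i0 : Fin m} {focal : Fin n}
  {assign : Fin n → Fin m}

theorem fullInit_vecMul_lumpMatrix (hps : ∀ i, (ps i).valid) (hassign : assign focal = i0)
    (hcard : ∀ i, (univ.filter fun j => j ≠ focal ∧ assign j = i).card = ks i) :
    fullInit (stratM ps assign) ᵥ* lumpMatrix (clusterOf hcard) = redInitM ps ks i0 := by
  ext ⟨A, x⟩
  rw [vecMul_lumpMatrix_apply, filter_clusterOf_eq,
    fullInit_eq_bernoulliProd (strat := stratM ps assign) fun j => hps (assign j),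
    sum_clusterM_bernoulliProd]
  have hblock (i : Fin m) :
      (fun j : CoplayerBlock focal assign i => (ps (assign j)).init) = fun _ => (ps i).init :=
    funext fun j => by rw [j.2.2]
  simp only [redInitM, stratM, hassign, hblock, poissonBinomial_const, card_coplayerBlock hcard,
    abs_one_sub_ite_sub (hps i0).1]

theorem fullM_mul_lumpMatrix (hps : ∀ i, (ps i).valid) (hassign : assign focal = i0)
    (hcard : ∀ i, (univ.filter fun j => j ≠ focal ∧ assign j = i).card = ks i) :
    fullM (stratM ps assign) * lumpMatrix (R := ℝ) (clusterOf hcard)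
      = lumpMatrix (R := ℝ) (clusterOf hcard) * redMM ps ks i0 := by
  ext h ⟨A', x'⟩
  rw [mul_lumpMatrix_apply, lumpMatrix_mul_apply, filter_clusterOf_eq, fullM_row_eq_bernoulliProd,
    sum_clusterM_bernoulliProd]
  have hnCoop := nCoop_eq_sum_blockCoop_add focal assign h
  have hfocal : nCoop h - (if h focal then 1 else 0) = ∑ i, blockCoop focal assign h i := by
    rw [hnCoop, Nat.add_sub_cancel]
  have hblock (i : Fin m) :
      (fun j : CoplayerBlock focal assign i =>
        (ps (assign j)).cond (h j) (nCoop h - if h j then 1 else 0))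
      = fun j : CoplayerBlock focal assign i =>
          if h j then (ps i).cond true (nCoop h - 1) else (ps i).cond false (nCoop h) :=
    funext fun j => by cases h j <;> simp [j.2.2]
  simp only [redMM, clusterOf, of_apply, stratM, hassign, hfocal, hblock, poissonBinomial_ite,
    card_coplayerBlock hcard, ← blockCoop_eq_card, ← hnCoop, abs_one_sub_ite_sub ((hps i0).2 _ _)]

end Reduction

theorem payoff_full_eq_reduced_discounted_m_general (n m : ℕ)
    (ps : Fin m → Mem1) (hps : ∀ i, (ps i).valid)
    (ks : Fin m → ℕ) (i0 : Fin m)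
    (focal : Fin n)
    (assign : Fin n → Fin m) (hassign : assign focal = i0)
    (hcard : ∀ i, (Finset.univ.filter fun j => j ≠ focal ∧ assign j = i).card = ks i)
    (δ : ℝ) (hδ0 : 0 < δ) (hδ1 : δ < 1) (a b : ℕ → ℝ) :
    ∑ h : FullState n,
        discMean δ (fullInit (stratM ps assign)) (fullM (stratM ps assign)) h *
          focalPayoff focal a b h
      = ∑ x : (i : Fin m) → Fin (ks i + 1),
          (discMean δ (redInitM ps ks i0) (redMM ps ks i0) (true, x) * a (∑ i, (x i : ℕ))
           + discMean δ (redInitM ps ks i0) (redMM ps ks i0) (false, x) * b (∑ i, (x i : ℕ))) := by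
  have hvalid (j : Fin n) : (stratM ps assign j).valid := hps (assign j)
  let P : Matrix (FullState n) (RStateM ks) ℝ := lumpMatrix (clusterOf hcard)
  let φ : RStateM ks → ℝ := fun s => if s.1 then a (∑ i, (s.2 i : ℕ)) else b (∑ i, (s.2 i : ℕ))
  have hpayoff : focalPayoff focal a b = P *ᵥ φ := by
    ext h
    rw [lumpMatrix_mulVec_apply, focalPayoff_eq_ite_sum_blockCoop focal assign]
    rfl
  have hsum := summable_geometric_mul_vecMul_pow hδ0.le hδ1 (fullInit_nonneg hvalid)
    (fullInit_dotProduct_one hvalid) (fullM_mem_rowStochastic hvalid)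
  calc _ = discMean δ (fullInit (stratM ps assign)) (fullM (stratM ps assign)) ⬝ᵥ (P *ᵥ φ) := by
        rw [← hpayoff]; rfl
    _ = discMean δ (redInitM ps ks i0) (redMM ps ks i0) ⬝ᵥ φ := by
        rw [dotProduct_mulVec, discMean_vecMul (fullM_mul_lumpMatrix hps hassign hcard) hsum,
          fullInit_vecMul_lumpMatrix hps hassign hcard]
    _ = _ := by
        simp only [dotProduct, Fintype.sum_prod_type_right, Fintype.sum_bool, φ, Bool.false_eq_true,
          if_true, if_false]

/-- With `m` strategies, the focal player's discounted long-term
payoff computed from the full chain equals that computed from the reduced chain. -/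
theorem payoff_full_eq_reduced_discounted_m (n m : ℕ) (hn : 2 ≤ n) (hm : 1 ≤ m)
    (ps : Fin m → Mem1) (hps : ∀ i, (ps i).valid)
    (ks : Fin m → ℕ) (hks : ∑ i, ks i = n - 1) (i0 : Fin m)
    (focal : Fin n) (hfocal : (focal : ℕ) = 0)
    (assign : Fin n → Fin m) (hassign : assign focal = i0)
    (hcard : ∀ i, (Finset.univ.filter fun j => j ≠ focal ∧ assign j = i).card = ks i)
    (δ : ℝ) (hδ0 : 0 < δ) (hδ1 : δ < 1) (a b : ℕ → ℝ) :
    ∑ h : FullState n,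
        discMean δ (fullInit (stratM ps assign)) (fullM (stratM ps assign)) h *
          focalPayoff focal a b h
      = ∑ x : (i : Fin m) → Fin (ks i + 1),
          (discMean δ (redInitM ps ks i0) (redMM ps ks i0) (true, x) * a (∑ i, (x i : ℕ))
           + discMean δ (redInitM ps ks i0) (redMM ps ks i0) (false, x) * b (∑ i, (x i : ℕ))) :=
  payoff_full_eq_reduced_discounted_m_general n m ps hps ks i0 focal assign hassign hcard δ hδ0 hδ1
    a b
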